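/- Let G = (V,E) be a block graph with no pendant paths, different from a path, and 𝓘 the collection of all connected zero forcing sets of G. Then any superset of a connected zero forcing set of G is again a connected zero forcing set, and for every A ⊆ V, all minimal supersets of A lying in 𝓘 have the same cardinality. -/

import Mathlib

/-- A vertex is (eventually) forced, starting from the initially colored set `S`,
under the zero forcing color change rule: a colored vertex all of whose other
neighbors are colored forces its remaining neighbor. -/
inductive SimpleGraph.Forced {V : Type*} (G : SimpleGraph V) (S : Set V) : V → Prop
  | init (v : V) (hv : v ∈ S) : SimpleGraph.Forced G S v
  | force (u v : V) (hu : SimpleGraph.Forced G S u) (huv : G.Adj u v)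
      (hrest : ∀ w, G.Adj u w → w ≠ v → SimpleGraph.Forced G S w) :
      SimpleGraph.Forced G S v

/-- `S` is a zero forcing set of `G`. -/
def SimpleGraph.IsZeroForcingSet {V : Type*} (G : SimpleGraph V) (S : Set V) : Prop :=
  ∀ v, G.Forced S v

/-- `S` is a connected zero forcing set of `G`. -/
def SimpleGraph.IsConnectedZFS {V : Type*} (G : SimpleGraph V) (S : Set V) : Prop :=
  G.IsZeroForcingSet S ∧ (G.induce S).Connected

/-- The zero forcing number `Z(G)`. -/
noncomputable def SimpleGraph.zfNumber {V : Type*} (G : SimpleGraph V) : ℕ :=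
  sInf {n | ∃ S : Set V, G.IsZeroForcingSet S ∧ S.ncard = n}

/-- The connected zero forcing number `Z_c(G)`. -/
noncomputable def SimpleGraph.czfNumber {V : Type*} (G : SimpleGraph V) : ℕ :=
  sInf {n | ∃ S : Set V, G.IsConnectedZFS S ∧ S.ncard = n}

/-- `P` is (the vertex set of) a connected component of `G − X`. -/
def SimpleGraph.IsCompOfDel {V : Type*} (G : SimpleGraph V) (X P : Set V) : Prop :=
  P.Nonempty ∧ Disjoint P X ∧ (G.induce P).Connected ∧
    ∀ u ∈ P, ∀ w, G.Adj u w → w ∉ X → w ∈ P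

/-- The induced subgraph `G[P]` is a path graph. -/
def SimpleGraph.IsPathGraphOn {V : Type*} (G : SimpleGraph V) (P : Set V) : Prop :=
  P.Nonempty ∧ (G.induce P).Connected ∧
    (∀ v ∈ P, (G.neighborSet v ∩ P).ncard ≤ 2) ∧
    ∃ v ∈ P, (G.neighborSet v ∩ P).ncard ≤ 1

/-- `P` is a pendant path attached to `v`: a path component of `G − v`,
one of whose ends (a base) is adjacent to `v`. -/
def SimpleGraph.IsPendantPath {V : Type*} (G : SimpleGraph V) (v : V) (P : Set V) : Prop :=
  G.IsCompOfDel {v} P ∧ G.IsPathGraphOn P ∧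
    ∃ b ∈ P, G.Adj v b ∧ (G.neighborSet b ∩ P).ncard ≤ 1

/-- `v` is a cut vertex of `G`. -/
def SimpleGraph.IsCutVertex {V : Type*} (G : SimpleGraph V) (v : V) : Prop :=
  ¬ (G.induce {v}ᶜ).Connected

/-- `G[B]` is connected and has no cut vertices. -/
def SimpleGraph.IsBiconnectedSet {V : Type*} (G : SimpleGraph V) (B : Set V) : Prop :=
  (G.induce B).Connected ∧
    ∀ v ∈ B, (B \ {v}).Nonempty → (G.induce (B \ {v})).Connected

/-- `B` is (the vertex set of) a block of `G`: a maximal subgraph with no cut vertices. -/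
def SimpleGraph.IsBlock {V : Type*} (G : SimpleGraph V) (B : Set V) : Prop :=
  G.IsBiconnectedSet B ∧ ∀ B', B ⊆ B' → G.IsBiconnectedSet B' → B' = B

/-- The induced subgraph `G[C]` is a cycle. -/
def SimpleGraph.IsCycleGraphOn {V : Type*} (G : SimpleGraph V) (C : Set V) : Prop :=
  3 ≤ C.ncard ∧ (G.induce C).Connected ∧ ∀ v ∈ C, (G.neighborSet v ∩ C).ncard = 2

/-- `D` is a (possibly empty) segment of the cycle `G[C]`:
a proper set of consecutive vertices along the cycle. -/
def SimpleGraph.IsSegmentOf {V : Type*} (G : SimpleGraph V) (C D : Set V) : Prop :=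
  D ⊆ C ∧ (D = ∅ ∨ ((G.induce D).Connected ∧ D ≠ C))

/-- The minimum degree of the induced subgraph `G[B]`. -/
noncomputable def SimpleGraph.minDegOn {V : Type*} (G : SimpleGraph V) (B : Set V) : ℕ :=
  sInf ((fun v => (G.neighborSet v ∩ B).ncard) '' B)

/-- `G − v` has at least three connected components. -/
def SimpleGraph.DelHasThreeComps {V : Type*} (G : SimpleGraph V) (v : V) : Prop :=
  ∃ P₁ P₂ P₃ : Set V, G.IsCompOfDel {v} P₁ ∧ G.IsCompOfDel {v} P₂ ∧ G.IsCompOfDel {v} P₃ ∧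
    Disjoint P₁ P₂ ∧ Disjoint P₁ P₃ ∧ Disjoint P₂ P₃

/-- `G − v` has exactly two connected components. -/
def SimpleGraph.DelHasTwoComps {V : Type*} (G : SimpleGraph V) (v : V) : Prop :=
  ∃ P₁ P₂ : Set V, G.IsCompOfDel {v} P₁ ∧ G.IsCompOfDel {v} P₂ ∧
    Disjoint P₁ P₂ ∧ P₁ ∪ P₂ = {v}ᶜ

/-!
Under these hypotheses `S` is a connected zero forcing set iff it contains every cut vertex and
all but at most one vertex of every block. If a connected zero forcing set missed a cut vertex
`v`, some component `D` of `G - v` would be forced from outside; the colored part of `D` is then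
always an induced path growing from the unique neighbor of `v` in `D`, so `D` is a pendant path.
Two uncolored vertices of a block are twins, so neither can ever be forced. Conversely, a set
`T ⊇ S` closed under the color change rule with an edge `u m`, `u ∈ T`, `m ∉ T`, yields a
second such edge `u' m'` beyond `m` in another block, and the component of `G - u'` containing
`m'` is strictly smaller than that of `G - u` containing `m`, an infinite descent.

The characterization is upward closed. If `S` and `T` are minimal over `A`, every `x ∈ S \ T`
is not a cut vertex, so it lies in a unique block `B`, and `B \ T = {x}`. Minimality of `S`
forces `B` to miss some `y`, which `T` must contain; `x ↦ y` is injective, and together with its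
mirror image this gives `|S| = |T|`.
-/

namespace SimpleGraph

open Set

variable {V : Type*} {G : SimpleGraph V}

def ReachableIn (G : SimpleGraph V) (A : Set V) (x y : V) : Prop :=
  ∃ p : G.Walk x y, ∀ z ∈ p.support, z ∈ A

namespace ReachableIn

variable {A B : Set V} {x y z : V}

theorem refl (hx : x ∈ A) : G.ReachableIn A x x :=
  ⟨.nil, by simpa using hx⟩

theorem of_adj (h : G.Adj x y) (hx : x ∈ A) (hy : y ∈ A) : G.ReachableIn A x y :=
  ⟨h.toWalk, by simpa using ⟨hx, hy⟩⟩

theorem symm (h : G.ReachableIn A x y) : G.ReachableIn A y x :=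
  let ⟨p, hp⟩ := h
  ⟨p.reverse, by simpa using hp⟩

theorem trans (h : G.ReachableIn A x y) (h' : G.ReachableIn A y z) : G.ReachableIn A x z := by
  obtain ⟨p, hp⟩ := h
  obtain ⟨q, hq⟩ := h'
  exact ⟨p.append q, fun w hw => (Walk.mem_support_append_iff p q).1 hw |>.elim (hp w) (hq w)⟩

theorem mono (hAB : A ⊆ B) (h : G.ReachableIn A x y) : G.ReachableIn B x y :=
  let ⟨p, hp⟩ := h
  ⟨p, fun z hz => hAB (hp z hz)⟩

theorem right_mem (h : G.ReachableIn A x y) : y ∈ A :=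
  let ⟨p, hp⟩ := h
  hp y p.end_mem_support

theorem exists_isPath (h : G.ReachableIn A x y) :
    ∃ p : G.Walk x y, p.IsPath ∧ ∀ z ∈ p.support, z ∈ A := by
  classical
  obtain ⟨p, hp⟩ := h
  exact ⟨p.bypass, p.bypass_isPath, fun z hz => hp z (p.support_bypass_subset_support hz)⟩

theorem reachableIn_setOf (h : G.ReachableIn A x y) :
    G.ReachableIn {w | G.ReachableIn A x w} x y := by
  classical
  obtain ⟨p, hp⟩ := h
  exact ⟨p, fun c hc => ⟨p.takeUntil c hc,
    fun w hw => hp w (p.support_takeUntil_subset_support hc hw)⟩⟩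

end ReachableIn

theorem reachableIn_support_of_mem {x y w : V} {p : G.Walk x y} (hw : w ∈ p.support) :
    G.ReachableIn {c | c ∈ p.support} x w := by
  classical
  exact ⟨p.takeUntil w hw, fun _ hc => p.support_takeUntil_subset_support hw hc⟩

theorem Walk.IsPath.exists_reachableIn_end {a b : V} {p : G.Walk a b} (hp : p.IsPath)
    {z w : V} (hw : w ∈ p.support) (hwz : w ≠ z) :
    ∃ e, (e = a ∨ e = b) ∧ e ≠ z ∧ G.ReachableIn ({c | c ∈ p.support} \ {z}) w e := by
  classical
  by_cases hz : z ∈ (p.takeUntil w hw).support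
  · have hnd := hp.support_nodup
    rw [← p.take_spec hw, Walk.support_append] at hnd
    have hzd : z ∉ (p.dropUntil w hw).support := by
      rw [← Walk.cons_tail_support]
      rintro (_ | ⟨_, hmem⟩)
      · exact hwz rfl
      · exact List.disjoint_of_nodup_append hnd hz hmem
    refine ⟨b, Or.inr rfl, fun hbz => hzd (hbz ▸ Walk.end_mem_support _), p.dropUntil w hw,
      fun c hc => ⟨p.support_dropUntil_subset_support hw hc, ?_⟩⟩
    rintro rfl
    exact hzd hc
  · refine ⟨a, Or.inl rfl, fun haz => hz (haz ▸ Walk.start_mem_support _),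
      (p.takeUntil w hw).reverse, fun c hc => ?_⟩
    rw [Walk.support_reverse, List.mem_reverse] at hc
    refine ⟨p.support_takeUntil_subset_support hw hc, ?_⟩
    rintro rfl
    exact hz hc

theorem ReachableIn.induce_reachable {A : Set V} {x y : V} (h : G.ReachableIn A x y)
    (hx : x ∈ A) (hy : y ∈ A) : (G.induce A).Reachable ⟨x, hx⟩ ⟨y, hy⟩ := by
  obtain ⟨p, hp⟩ := h
  induction p with
  | nil => rfl
  | @cons a b c hab q ih =>
    have hb : b ∈ A := hp b (by simp)
    exact (Adj.reachable (by simpa using hab : (G.induce A).Adj ⟨a, hx⟩ ⟨b, hb⟩)).trans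
      (ih hb hy fun z hz => hp z (by simp [hz]))

theorem Reachable.reachableIn_induce {A : Set V} {x y : A} (h : (G.induce A).Reachable x y) :
    G.ReachableIn A x y := by
  obtain ⟨p⟩ := h
  induction p with
  | nil => exact .refl (Subtype.mem _)
  | cons hab q ih => exact (ReachableIn.of_adj (by simpa using hab) (Subtype.mem _)
      (Subtype.mem _)).trans ih

theorem induce_connected_iff {A : Set V} :
    (G.induce A).Connected ↔ A.Nonempty ∧ ∀ x ∈ A, ∀ y ∈ A, G.ReachableIn A x y := by
  refine ⟨fun h => ⟨?_, fun x hx y hy => ?_⟩, fun ⟨⟨a, ha⟩, h⟩ => ?_⟩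
  · obtain ⟨⟨a, ha⟩⟩ := h.nonempty
    exact ⟨a, ha⟩
  · exact (h.preconnected ⟨x, hx⟩ ⟨y, hy⟩).reachableIn_induce
  · have : Nonempty A := ⟨⟨a, ha⟩⟩
    exact ⟨fun x y => (h x x.2 y y.2).induce_reachable x.2 y.2⟩

theorem induce_connected_of_reachableIn_core {A C : Set V} (hA : A.Nonempty) (hCA : C ⊆ A)
    (hC : ∀ c ∈ C, ∀ c' ∈ C, G.ReachableIn C c c')
    (h : ∀ x ∈ A, ∃ c ∈ C, G.ReachableIn A x c) : (G.induce A).Connected := by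
  refine induce_connected_iff.2 ⟨hA, fun x hx y hy => ?_⟩
  obtain ⟨c, hc, hxc⟩ := h x hx
  obtain ⟨c', hc', hyc'⟩ := h y hy
  exact hxc.trans (((hC c hc c' hc').mono hCA).trans hyc'.symm)

/-- Closed under the color change rule; these are the complements of forts. -/
def ForcingClosed (G : SimpleGraph V) (T : Set V) : Prop :=
  ∀ u ∈ T, ∀ w, G.Adj u w → w ∉ T → ∃ w', G.Adj u w' ∧ w' ≠ w ∧ w' ∉ T

theorem Forced.mem_of_forcingClosed {S T : Set V} (hT : G.ForcingClosed T) (hST : S ⊆ T)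
    {v : V} (h : G.Forced S v) : v ∈ T := by
  induction h with
  | init v hv => exact hST hv
  | force u v _ huv _ hu hrest =>
    by_contra hv
    obtain ⟨w, huw, hwv, hw⟩ := hT u hu v huv hv
    exact hw (hrest w huw hwv)

theorem forcingClosed_setOf_forced (S : Set V) : G.ForcingClosed {v | G.Forced S v} := by
  intro u hu w huw hw
  by_contra! h
  exact hw (.force u w hu huw h)

theorem isZeroForcingSet_iff {S : Set V} :
    G.IsZeroForcingSet S ↔ ∀ T, G.ForcingClosed T → S ⊆ T → T = univ := by
  refine ⟨fun h T hT hST => eq_univ_of_forall fun v => (h v).mem_of_forcingClosed hT hST,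
    fun h v => ?_⟩
  have := h _ (forcingClosed_setOf_forced S) fun v hv => .init v hv
  exact (this ▸ mem_univ v : v ∈ {v | G.Forced S v})

theorem IsZeroForcingSet.mono {S S' : Set V} (h : G.IsZeroForcingSet S) (hSS' : S ⊆ S') :
    G.IsZeroForcingSet S' :=
  isZeroForcingSet_iff.2 fun T hT hS'T => isZeroForcingSet_iff.1 h T hT (hSS'.trans hS'T)

theorem forcingClosed_of_ncard_ne_one [Finite V] {T : Set V} {q : V}
    (hT : ∀ u ∈ T, u ≠ q → G.neighborSet u ⊆ T) (hq : (G.neighborSet q \ T).ncard ≠ 1) :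
    G.ForcingClosed T := by
  intro u hu w huw hw
  obtain rfl : u = q := by
    by_contra h
    exact hw (hT u hu h huw)
  have : 1 < (G.neighborSet u \ T).ncard := by
    have := (ncard_pos (s := G.neighborSet u \ T)).2 ⟨w, huw, hw⟩
    omega
  obtain ⟨w', hw', hw'w⟩ := exists_ne_of_one_lt_ncard this w
  exact ⟨w', hw'.1, hw'w, hw'.2⟩

theorem not_isZeroForcingSet_of_twins {S : Set V} {a b : V} (hab : G.Adj a b)
    (hba : ∀ u, G.Adj u a → u ≠ b → G.Adj u b)
    (hab' : ∀ u, G.Adj u b → u ≠ a → G.Adj u a)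
    (ha : a ∉ S) (hb : b ∉ S) : ¬ G.IsZeroForcingSet S := by
  have hT : G.ForcingClosed {a, b}ᶜ := by
    intro u hu w huw hw
    simp only [mem_compl_iff, mem_insert_iff, mem_singleton_iff, not_or] at hu
    obtain rfl | rfl : w = a ∨ w = b := by simpa [or_iff_not_imp_left] using hw
    · exact ⟨b, hba u huw hu.2, hab.ne', by simp⟩
    · exact ⟨a, hab' u huw hu.1, hab.ne, by simp⟩
  intro h
  have := isZeroForcingSet_iff.1 h _ hT fun s hs => by rintro (rfl | rfl) <;> contradiction
  exact (this ▸ mem_univ a : a ∈ ({a, b}ᶜ : Set V)) (mem_insert a _)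

/-- The vertices of `D` already colored when `Dᶜ` forces into `D` through `d`: they form an
induced path in `G[D]` from `d` to the active end `q`. -/
structure IsForcingChain (G : SimpleGraph V) (D Q : Set V) (d q : V) : Prop where
  subset : Q ⊆ D
  start_mem : d ∈ Q
  end_mem : q ∈ Q
  neighborSet_inter_subset : ∀ x ∈ Q, x ≠ q → G.neighborSet x ∩ D ⊆ Q
  ncard_neighborSet_inter_le_two : ∀ x ∈ Q, x ≠ q → (G.neighborSet x ∩ D).ncard ≤ 2
  ncard_neighborSet_end_le_one : (G.neighborSet q ∩ Q).ncard ≤ 1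
  ncard_neighborSet_start_le_one : (G.neighborSet d ∩ D).ncard ≤ 1 ∨ Q = {d}

namespace IsForcingChain

variable {D Q : Set V} {d q : V}

theorem singleton (hd : d ∈ D) : G.IsForcingChain D {d} d d where
  subset := singleton_subset_iff.2 hd
  start_mem := rfl
  end_mem := rfl
  neighborSet_inter_subset _ hx hxd := absurd hx hxd
  ncard_neighborSet_inter_le_two _ hx hxd := absurd hx hxd
  ncard_neighborSet_end_le_one := by simp
  ncard_neighborSet_start_le_one := .inr rfl

theorem extend [Finite V] (h : G.IsForcingChain D Q d q) {e : V}
    (he : G.neighborSet q ∩ (D \ Q) = {e}) : G.IsForcingChain D (insert e Q) d e := by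
  have heq : e ∈ G.neighborSet q ∩ (D \ Q) := he ▸ rfl
  have hq : G.neighborSet q ∩ D ⊆ insert e Q := fun y hy => by
    by_cases hyQ : y ∈ Q
    · exact .inr hyQ
    · exact .inl (he ▸ ⟨hy.1, hy.2, hyQ⟩ : y ∈ ({e} : Set V))
  refine ⟨insert_subset heq.2.1 h.subset, .inr h.start_mem, mem_insert e Q, ?_, ?_, ?_, ?_⟩
  · rintro x (rfl | hx) hxe
    · exact absurd rfl hxe
    · rcases eq_or_ne x q with rfl | hxq
      · exact hq
      · exact (h.neighborSet_inter_subset x hx hxq).trans (subset_insert e Q)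
  · rintro x (rfl | hx) hxe
    · exact absurd rfl hxe
    · rcases eq_or_ne x q with rfl | hxq
      · calc (G.neighborSet x ∩ D).ncard ≤ (insert e (G.neighborSet x ∩ Q)).ncard :=
              ncard_le_ncard (fun y hy => by
                rcases hq hy with rfl | hyQ
                · exact mem_insert _ _
                · exact .inr ⟨hy.1, hyQ⟩)
          _ ≤ (G.neighborSet x ∩ Q).ncard + 1 := ncard_insert_le e _
          _ ≤ 2 := by linarith [h.ncard_neighborSet_end_le_one]
      · exact h.ncard_neighborSet_inter_le_two x hx hxq
  · refine (ncard_le_ncard (t := {q}) ?_).trans (ncard_singleton q).le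
    rintro y ⟨hey, rfl | hyQ⟩
    · exact absurd hey (G.irrefl)
    · by_contra hyq
      exact heq.2.2 (h.neighborSet_inter_subset y hyQ hyq ⟨hey.symm, heq.2.1⟩)
  · refine .inl (h.ncard_neighborSet_start_le_one.elim id fun hQ => ?_)
    subst hQ
    obtain rfl : q = d := h.end_mem
    refine (ncard_le_ncard (t := {e}) fun y (hy : y ∈ G.neighborSet q ∩ D) =>
      he ▸ ⟨hy.1, hy.2, ?_⟩).trans (ncard_singleton e).le
    rintro rfl
    exact G.irrefl hy.1

theorem isPathGraphOn (h : G.IsForcingChain D Q d q) (hD : (G.induce D).Connected)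
    (hDQ : D ⊆ Q) : G.IsPathGraphOn D ∧ (G.neighborSet d ∩ D).ncard ≤ 1 := by
  obtain rfl : Q = D := h.subset.antisymm hDQ
  have hd : (G.neighborSet d ∩ Q).ncard ≤ 1 := by
    rcases h.ncard_neighborSet_start_le_one with hd | hQ
    · exact hd
    · simp [hQ]
  refine ⟨⟨⟨d, h.start_mem⟩, hD, fun x hx => ?_, d, h.start_mem, hd⟩, hd⟩
  rcases eq_or_ne x q with rfl | hxq
  · exact h.ncard_neighborSet_end_le_one.trans one_le_two
  · exact h.ncard_neighborSet_inter_le_two x hx hxq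

theorem forcingClosed [Finite V] (h : G.IsForcingChain D Q d q) {v : V} (hD : G.IsCompOfDel {v} D)
    (hvd : G.neighborSet v ∩ D = {d}) (hq : (G.neighborSet q ∩ (D \ Q)).ncard ≠ 1) :
    G.ForcingClosed (Dᶜ ∪ Q) := by
  refine forcingClosed_of_ncard_ne_one (q := q) (fun u hu huq w huw => ?_) ?_
  · by_cases hwD : w ∈ D
    · refine .inr ?_
      rcases hu with hu | hu
      · obtain rfl : u = v := by_contra fun huv => hu (hD.2.2.2 w hwD u huw.symm huv)
        exact (hvd ▸ ⟨huw, hwD⟩ : w ∈ ({d} : Set V)) ▸ h.start_mem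
      · exact h.neighborSet_inter_subset u hu huq ⟨huw, hwD⟩
    · exact .inl hwD
  · convert hq using 2
    ext w
    simp [and_comm]

end IsForcingChain

theorem isPendantPath_of_isZeroForcingSet_compl [Finite V] {v : V} {D : Set V}
    (hD : G.IsCompOfDel {v} D) (hZ : G.IsZeroForcingSet Dᶜ) : G.IsPendantPath v D := by
  have hZ' := isZeroForcingSet_iff.1 hZ
  have hsub : ∀ Q, Dᶜ ∪ Q = univ → D ⊆ Q := fun Q hQ x hx =>
    ((hQ ▸ mem_univ x : x ∈ Dᶜ ∪ Q).resolve_left (not_not.2 hx))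
  -- only `v` can force into `D`
  obtain ⟨d, hd⟩ : ∃ d, G.neighborSet v ∩ D = {d} := by
    refine ncard_eq_one.1 (by_contra fun h => ?_)
    refine hD.1.ne_empty (subset_empty_iff.1 (hsub ∅ ?_))
    rw [union_empty]
    refine hZ' _ (forcingClosed_of_ncard_ne_one (q := v) (fun u hu huv w huw hwD => ?_) ?_) le_rfl
    · exact hu (hD.2.2.2 w hwD u huw.symm huv)
    · rwa [sdiff_compl]
  have hdD : d ∈ D := (hd ▸ rfl : d ∈ G.neighborSet v ∩ D).2
  have hvd : G.Adj v d := (hd ▸ rfl : d ∈ G.neighborSet v ∩ D).1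
  suffices ∀ n Q q, G.IsForcingChain D Q d q → (D \ Q).ncard = n → G.IsPendantPath v D from
    this _ {d} d (.singleton hdD) rfl
  intro n
  induction n using Nat.strong_induction_on with
  | _ n ih =>
  intro Q q hQ hn
  by_cases hDQ : D ⊆ Q
  · obtain ⟨hpath, hdeg⟩ := hQ.isPathGraphOn hD.2.2.1 hDQ
    exact ⟨hD, hpath, d, hdD, hvd, hdeg⟩
  obtain ⟨e, he⟩ : ∃ e, G.neighborSet q ∩ (D \ Q) = {e} :=
    ncard_eq_one.1 (by_contra fun h => hDQ (hsub Q (hZ' _ (hQ.forcingClosed hD hd h)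
      subset_union_left)))
  have heQ : e ∈ D \ Q := (he ▸ rfl : e ∈ G.neighborSet q ∩ (D \ Q)).2
  refine ih _ (hn ▸ ncard_lt_ncard ?_) _ e (hQ.extend he) rfl
  exact ssubset_iff_of_subset (sdiff_subset_sdiff_right (subset_insert e Q)) |>.2
    ⟨e, heQ, fun h => h.2 (mem_insert e Q)⟩

theorem isCompOfDel_setOf_reachableIn {X : Set V} {z : V} (hz : z ∉ X) :
    G.IsCompOfDel X {w | G.ReachableIn Xᶜ z w} := by
  refine ⟨⟨z, .refl hz⟩,
    Set.disjoint_left.2 fun w (hw : G.ReachableIn Xᶜ z w) => hw.right_mem, ?_,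
    fun u hu w huw hw => hu.trans (.of_adj huw hu.right_mem hw)⟩
  exact induce_connected_iff.2 ⟨⟨z, .refl hz⟩, fun x hx y hy =>
    hx.reachableIn_setOf.symm.trans hy.reachableIn_setOf⟩

theorem IsConnectedZFS.mem_of_isCutVertex [Finite V] {S : Set V} {v : V}
    (hS : G.IsConnectedZFS S) (hv : G.IsCutVertex v) (hnp : ∀ P, ¬ G.IsPendantPath v P) :
    v ∈ S := by
  by_contra hvS
  obtain ⟨⟨s, hs⟩, hSr⟩ := induce_connected_iff.1 hS.2
  have hSv : S ⊆ {v}ᶜ := fun x hx hxv => hvS (hxv ▸ hx)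
  obtain ⟨z, hzv, hz⟩ : ∃ z, z ≠ v ∧ ¬ G.ReachableIn {v}ᶜ s z := by
    by_contra! h
    exact hv (induce_connected_iff.2
      ⟨⟨s, hSv hs⟩, fun x hx y hy => (h x hx).symm.trans (h y hy)⟩)
  refine hnp _ (isPendantPath_of_isZeroForcingSet_compl
    (isCompOfDel_setOf_reachableIn (X := {v}) hzv) (hS.1.mono fun x hx hxz => ?_))
  exact hz (((hSr s hs x hx).mono hSv).trans hxz.symm)

theorem IsClique.isBiconnectedSet {A : Set V} (h : G.IsClique A) (hA : A.Nonempty) :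
    G.IsBiconnectedSet A := by
  have hconn : ∀ B ⊆ A, B.Nonempty → (G.induce B).Connected := fun B hBA hB =>
    induce_connected_iff.2 ⟨hB, fun x hx y hy => by
      rcases eq_or_ne x y with rfl | hxy
      · exact .refl hx
      · exact .of_adj (h (hBA hx) (hBA hy) hxy) hx hy⟩
  exact ⟨hconn A subset_rfl hA, fun _ _ => hconn _ sdiff_subset⟩

theorem exists_isBlock_superset [Finite V] {A : Set V} (hA : G.IsBiconnectedSet A) :
    ∃ B, G.IsBlock B ∧ A ⊆ B := by
  obtain ⟨B, ⟨hB, hAB⟩, hmax⟩ :=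
    (toFinite {X | G.IsBiconnectedSet X ∧ A ⊆ X}).exists_maximalFor id _ ⟨A, hA, subset_rfl⟩
  exact ⟨B, ⟨hB, fun B' hBB' hB' => (hmax ⟨hB', hAB.trans hBB'⟩ hBB').antisymm hBB'⟩,
    hAB⟩

theorem exists_isBlock_of_adj [Finite V] {a b : V} (h : G.Adj a b) :
    ∃ B, G.IsBlock B ∧ a ∈ B ∧ b ∈ B := by
  obtain ⟨B, hB, hab⟩ := exists_isBlock_superset
    ((isClique_pair.2 fun _ => h).isBiconnectedSet (insert_nonempty a {b}))
  exact ⟨B, hB, hab (mem_insert a _), hab (mem_insert_of_mem a rfl)⟩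

theorem IsBiconnectedSet.reachableIn_diff {X : Set V} (hX : G.IsBiconnectedSet X) {z x y : V}
    (hx : x ∈ X \ {z}) (hy : y ∈ X \ {z}) : G.ReachableIn (X \ {z}) x y := by
  by_cases hz : z ∈ X
  · exact (induce_connected_iff.1 (hX.2 z hz ⟨x, hx⟩)).2 x hx y hy
  · rw [sdiff_singleton_eq_self hz] at hx hy ⊢
    exact (induce_connected_iff.1 hX.1).2 x hx y hy

theorem IsBiconnectedSet.union_support {X : Set V} (hX : G.IsBiconnectedSet X) {a b : V}
    {p : G.Walk a b} (hp : p.IsPath) (ha : a ∈ X) (hb : b ∈ X) :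
    G.IsBiconnectedSet (X ∪ {c | c ∈ p.support}) := by
  refine ⟨induce_connected_of_reachableIn_core ⟨a, .inl ha⟩ subset_union_left
    (induce_connected_iff.1 hX.1).2 ?_, fun z _ hne => ?_⟩
  · rintro x (hx | hx)
    · exact ⟨x, hx, .refl (.inl hx)⟩
    · exact ⟨a, ha, (reachableIn_support_of_mem hx).symm.mono subset_union_right⟩
  refine induce_connected_of_reachableIn_core hne (sdiff_subset_sdiff_left subset_union_left)
    (fun x hx y hy => hX.reachableIn_diff hx hy) ?_
  rintro x ⟨hx | hx, hxz⟩
  · exact ⟨x, ⟨hx, hxz⟩, .refl ⟨.inl hx, hxz⟩⟩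
  · obtain ⟨e, he, hez, hxe⟩ := hp.exists_reachableIn_end hx hxz
    refine ⟨e, ⟨he.elim (· ▸ ha) (· ▸ hb), hez⟩, hxe.mono ?_⟩
    exact sdiff_subset_sdiff_left subset_union_right

theorem IsBlock.support_subset {B : Set V} (hB : G.IsBlock B) {a b : V} {p : G.Walk a b}
    (hp : p.IsPath) (ha : a ∈ B) (hb : b ∈ B) : ∀ c ∈ p.support, c ∈ B := fun c hc =>
  hB.2 _ subset_union_left (hB.1.union_support hp ha hb) ▸ (.inr hc : c ∈ B ∪ _)

section BlockGraph

variable (hblock : ∀ B, G.IsBlock B → G.IsClique B)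
include hblock

theorem adj_of_not_isCutVertex [Finite V] {m u w : V} (hm : ¬ G.IsCutVertex m)
    (hu : G.Adj m u) (hw : G.Adj m w) (huw : u ≠ w) : G.Adj u w := by
  obtain ⟨B, hB, hmB, hwB⟩ := exists_isBlock_of_adj hw
  obtain ⟨p, hp, hpm⟩ := ((induce_connected_iff.1 (not_not.1 hm)).2 u hu.ne'
    w hw.ne').exists_isPath
  have hp' : (Walk.cons hu p).IsPath := hp.cons fun h => hpm m h rfl
  exact hblock B hB (hB.support_subset hp' hmB hwB u (by simp)) hwB huw

theorem exists_isBlock_insert_neighborSet_subset [Finite V] {m : V}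
    (hm : ¬ G.IsCutVertex m) : ∃ B, G.IsBlock B ∧ insert m (G.neighborSet m) ⊆ B := by
  refine exists_isBlock_superset (IsClique.isBiconnectedSet ?_ (insert_nonempty _ _))
  exact isClique_insert.2 ⟨fun u hu w hw huw => adj_of_not_isCutVertex hblock hm hu hw huw,
    fun _ hu _ => hu⟩

theorem IsBlock.eq_of_not_isCutVertex [Finite V] {m : V} (hm : ¬ G.IsCutVertex m)
    {B B' : Set V} (hB : G.IsBlock B) (hmB : m ∈ B) (hB' : G.IsBlock B') (hmB' : m ∈ B') :
    B = B' := by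
  obtain ⟨B₀, hB₀, hsub⟩ := exists_isBlock_insert_neighborSet_subset hblock hm
  have key : ∀ B, G.IsBlock B → m ∈ B → B = B₀ := fun B hB hmB =>
    (hB.2 B₀ (fun c hc => hsub (by
      rcases eq_or_ne m c with rfl | hmc
      · exact mem_insert m _
      · exact .inr (hblock B hB hmB hc hmc))) hB₀.1).symm
  rw [key B hB hmB, key B' hB' hmB']

theorem not_reachableIn_of_isBlock_ne {B₁ B₂ : Set V} (hB₁ : G.IsBlock B₁)
    (hB₂ : G.IsBlock B₂) (hne : B₁ ≠ B₂) {u x y : V} (hu₁ : u ∈ B₁) (hu₂ : u ∈ B₂)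
    (hx : x ∈ B₁) (hxu : x ≠ u) (hy : y ∈ B₂) : ¬ G.ReachableIn {u}ᶜ x y := by
  intro h
  obtain ⟨p, hp, hpu⟩ := h.exists_isPath
  have hxB₂ : x ∈ B₂ :=
    hB₂.support_subset (p := .cons (hblock B₁ hB₁ hu₁ hx hxu.symm) p)
      (hp.cons fun h => hpu u h rfl) hu₂ hy x (by simp)
  refine hne (hB₁.2 B₂ (fun c hc => ?_) hB₂.1).symm
  rcases eq_or_ne c u with rfl | hcu
  · exact hu₂
  rcases eq_or_ne c x with rfl | hcx
  · exact hxB₂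
  have hq : (Walk.cons (hblock B₁ hB₁ hu₁ hc hcu.symm)
      (.cons (hblock B₁ hB₁ hc hx hcx) .nil)).IsPath := by
    simp [hcu.symm, hcx, hxu.symm]
  exact hB₂.support_subset hq hu₂ hxB₂ c (by simp)

end BlockGraph

theorem reachableIn_of_walk {S : Set V}
    (hS : ∀ b ∉ S, ∀ ⦃u w⦄, G.Adj b u → G.Adj b w → u ≠ w → G.Adj u w) {x y : V}
    (p : G.Walk x y) (hx : x ∈ S) (hy : y ∈ S) : G.ReachableIn S x y := by
  induction h : p.length using Nat.strong_induction_on generalizing x p with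
  | _ n ih =>
  match p with
  | .nil => exact .refl hx
  | .cons (v := b) hxb q =>
    by_cases hb : b ∈ S
    · exact (ReachableIn.of_adj hxb hx hb).trans (ih _ (by simp [← h]) q hb rfl)
    match q with
    | .nil => exact absurd hy hb
    | .cons (v := c) hbc r =>
      rcases eq_or_ne x c with rfl | hxc
      · exact ih _ (by simp [← h]) r hx rfl
      · exact ih _ (by simp [← h]) (.cons (hS b hb hxb.symm hbc hxc) r) hx rfl

theorem exists_adj_ne_of_forall_not_isPendantPath (hnp : ∀ v P, ¬ G.IsPendantPath v P)
    {x u : V} (hxu : G.Adj x u) : ∃ u', G.Adj x u' ∧ u' ≠ u := by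
  by_contra! h
  have hconn : (G.induce {x}).Connected :=
    induce_connected_iff.2 ⟨⟨x, rfl⟩, by rintro a rfl b rfl; exact .refl rfl⟩
  have hdeg : (G.neighborSet x ∩ {x}).ncard ≤ 1 := by simp
  refine hnp u {x} ⟨⟨⟨x, rfl⟩, disjoint_singleton.2 hxu.ne, hconn, ?_⟩,
    ⟨⟨x, rfl⟩, hconn, by rintro _ rfl; simp, x, rfl, hdeg⟩, x, rfl, hxu.symm, hdeg⟩
  rintro a rfl w haw hwu
  exact absurd (h w haw) hwu

theorem nontrivial_of_not_isPathGraphOn_univ (hG : G.Connected)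
    (hnpath : ¬ G.IsPathGraphOn univ) : Nontrivial V := by
  by_contra h
  have : Subsingleton V := not_nontrivial_iff_subsingleton.1 h
  obtain ⟨v⟩ := hG.nonempty
  exact hnpath ⟨⟨v, trivial⟩, induce_connected_iff.2 ⟨⟨v, trivial⟩,
    fun x _ y _ => Subsingleton.elim x y ▸ .refl trivial⟩, fun w _ => by simp, v, trivial,
    by simp⟩

theorem induce_connected_of_forall_isCutVertex_mem [Finite V] (hG : G.Connected)
    (hblock : ∀ B, G.IsBlock B → G.IsClique B) {S : Set V}
    (hcut : ∀ v, G.IsCutVertex v → v ∈ S) (hne : S.Nonempty) : (G.induce S).Connected :=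
  induce_connected_iff.2 ⟨hne, fun x hx y hy =>
    reachableIn_of_walk (fun _ hb _ _ => adj_of_not_isCutVertex hblock (mt (hcut _) hb))
      (hG.preconnected x y).some hx hy⟩

theorem setOf_reachableIn_ssubset {u m u' m' : V} (huu' : u ≠ u') (hm'u : m' ≠ u)
    (hum : G.Adj u m) (hmu' : G.Adj m u') (hu'm' : G.Adj u' m')
    (hsep : ¬ G.ReachableIn {u'}ᶜ m m') :
    {a | G.ReachableIn {u'}ᶜ m' a} ⊂ {a | G.ReachableIn {u}ᶜ m a} := by
  have hmm' : G.ReachableIn {u}ᶜ m m' :=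
    (ReachableIn.of_adj hmu' hum.ne' huu'.symm).trans (.of_adj hu'm' huu'.symm hm'u)
  refine (ssubset_iff_of_subset fun a ha => hmm'.trans ?_).2
    ⟨m, ReachableIn.refl hum.ne', fun h => hsep h.symm⟩
  obtain ⟨p, hp⟩ := ha
  refine ⟨p, fun c hc (hcu : c = u) => hsep ?_⟩
  subst hcu
  exact ((reachableIn_support_of_mem hc).mono hp).trans (.of_adj hum huu' hmu'.ne) |>.symm

def AlmostCoversBlocks (G : SimpleGraph V) (S : Set V) : Prop :=
  ∀ B, G.IsBlock B → (B \ S).ncard ≤ 1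

namespace AlmostCoversBlocks

variable [Finite V] {S T : Set V}

theorem mono (hS : G.AlmostCoversBlocks S) (hST : S ⊆ T) : G.AlmostCoversBlocks T :=
  fun B hB => (ncard_le_ncard (sdiff_subset_sdiff_right hST)).trans (hS B hB)

theorem eq_of_notMem (hS : G.AlmostCoversBlocks S) {B : Set V} (hB : G.IsBlock B) {a b : V}
    (ha : a ∈ B) (hb : b ∈ B) (haS : a ∉ S) (hbS : b ∉ S) : a = b :=
  (ncard_le_one (toFinite _)).1 (hS B hB) a ⟨ha, haS⟩ b ⟨hb, hbS⟩

theorem mem_of_adj (hS : G.AlmostCoversBlocks S) {m u : V} (hmu : G.Adj m u) (hm : m ∉ S) :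
    u ∈ S := by
  obtain ⟨B, hB, hmB, huB⟩ := exists_isBlock_of_adj hmu
  by_contra hu
  exact hmu.ne (hS.eq_of_notMem hB hmB huB hm hu)

theorem nonempty (hS : G.AlmostCoversBlocks S) {a b : V} (hab : G.Adj a b) : S.Nonempty := by
  by_cases ha : a ∈ S
  · exact ⟨a, ha⟩
  · exact ⟨b, hS.mem_of_adj hab ha⟩

theorem exists_adj_setOf_reachableIn_ssubset (hblock : ∀ B, G.IsBlock B → G.IsClique B)
    (hdeg : ∀ x, ∃ u u', G.Adj x u ∧ G.Adj x u' ∧ u ≠ u') (hT : G.AlmostCoversBlocks T)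
    (hcl : G.ForcingClosed T) {u m : V} (hu : u ∈ T) (hm : m ∉ T) (hum : G.Adj u m) :
    ∃ u' m', u' ∈ T ∧ m' ∉ T ∧ G.Adj u' m' ∧
      {a | G.ReachableIn {u'}ᶜ m' a} ⊂ {a | G.ReachableIn {u}ᶜ m a} := by
  obtain ⟨u', hmu', hu'u⟩ : ∃ u', G.Adj m u' ∧ u' ≠ u := by
    obtain ⟨a, b, ha, hb, hab⟩ := hdeg m
    rcases eq_or_ne a u with rfl | hau
    · exact ⟨b, hb, hab.symm⟩
    · exact ⟨a, ha, hau⟩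
  have hu' : u' ∈ T := hT.mem_of_adj hmu' hm
  obtain ⟨m', hu'm', hm'm, hm'⟩ := hcl u' hu' m hmu'.symm hm
  obtain ⟨B₁, hB₁, hu'B₁, hmB₁⟩ := exists_isBlock_of_adj hmu'.symm
  obtain ⟨B₂, hB₂, hu'B₂, hm'B₂⟩ := exists_isBlock_of_adj hu'm'
  have hne : B₁ ≠ B₂ := by
    rintro rfl
    exact hm'm (hT.eq_of_notMem hB₁ hm'B₂ hmB₁ hm' hm)
  refine ⟨u', m', hu', hm', hu'm', setOf_reachableIn_ssubset hu'u.symm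
    (fun h => hm' (h ▸ hu)) hum hmu' hu'm' ?_⟩
  exact not_reachableIn_of_isBlock_ne hblock hB₁ hB₂ hne hu'B₁ hu'B₂ hmB₁ hmu'.ne hm'B₂

/-- Infinite descent: an edge from `T` to its complement would yield another one whose far
side has a strictly smaller component after deleting the near side. -/
theorem eq_univ_of_forcingClosed (hblock : ∀ B, G.IsBlock B → G.IsClique B)
    (hdeg : ∀ x, ∃ u u', G.Adj x u ∧ G.Adj x u' ∧ u ≠ u') (hT : G.AlmostCoversBlocks T)
    (hcl : G.ForcingClosed T) : T = univ := by
  by_contra hTu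
  obtain ⟨m, hm⟩ := (ne_univ_iff_exists_notMem T).1 hTu
  obtain ⟨u, -, hmu, -⟩ := hdeg m
  obtain ⟨⟨u, m⟩, ⟨hu, hm, hum⟩, hmin⟩ :=
    exists_min_image {e : V × V | e.1 ∈ T ∧ e.2 ∉ T ∧ G.Adj e.1 e.2}
      (fun e => {a | G.ReachableIn {e.1}ᶜ e.2 a}.ncard) (toFinite _)
      ⟨(u, m), hT.mem_of_adj hmu hm, hm, hmu.symm⟩
  obtain ⟨u', m', hu', hm', hum', hlt⟩ :=
    hT.exists_adj_setOf_reachableIn_ssubset hblock hdeg hcl hu hm hum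
  exact (hmin (u', m') ⟨hu', hm', hum'⟩).not_gt (ncard_lt_ncard hlt)

theorem isZeroForcingSet (hblock : ∀ B, G.IsBlock B → G.IsClique B)
    (hdeg : ∀ x, ∃ u u', G.Adj x u ∧ G.Adj x u' ∧ u ≠ u') (hS : G.AlmostCoversBlocks S) :
    G.IsZeroForcingSet S :=
  isZeroForcingSet_iff.2 fun _ hT hST => (hS.mono hST).eq_univ_of_forcingClosed hblock hdeg hT

end AlmostCoversBlocks

theorem IsZeroForcingSet.almostCoversBlocks [Finite V]
    (hblock : ∀ B, G.IsBlock B → G.IsClique B) {S : Set V} (hS : G.IsZeroForcingSet S)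
    (hcut : ∀ v, G.IsCutVertex v → v ∈ S) : G.AlmostCoversBlocks S := by
  intro B hB
  by_contra! h
  obtain ⟨a, ha, b, hb, hab⟩ := (one_lt_ncard (toFinite _)).1 h
  have hadj := hblock B hB ha.1 hb.1 hab
  refine not_isZeroForcingSet_of_twins hadj (fun u hu hub => ?_) (fun u hu hua => ?_) ha.2 hb.2 hS
  · exact adj_of_not_isCutVertex hblock (mt (hcut a) ha.2) hu.symm hadj hub
  · exact adj_of_not_isCutVertex hblock (mt (hcut b) hb.2) hu.symm hadj.symm hua

theorem isConnectedZFS_iff [Finite V] (hG : G.Connected)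
    (hblock : ∀ B, G.IsBlock B → G.IsClique B) (hnp : ∀ v P, ¬ G.IsPendantPath v P)
    (hdeg : ∀ x, ∃ u u', G.Adj x u ∧ G.Adj x u' ∧ u ≠ u') {S : Set V} :
    G.IsConnectedZFS S ↔ (∀ v, G.IsCutVertex v → v ∈ S) ∧ G.AlmostCoversBlocks S := by
  refine ⟨fun h => ?_, fun ⟨hcut, hS⟩ => ⟨hS.isZeroForcingSet hblock hdeg, ?_⟩⟩
  · have hcut : ∀ v, G.IsCutVertex v → v ∈ S := fun v hv => h.mem_of_isCutVertex hv (hnp v)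
    exact ⟨hcut, h.1.almostCoversBlocks hblock hcut⟩
  · obtain ⟨v⟩ := hG.nonempty
    obtain ⟨u, -, hvu, -⟩ := hdeg v
    exact induce_connected_of_forall_isCutVertex_mem hG hblock hcut (hS.nonempty hvu)

section Exchange

variable [Finite V] (hblock : ∀ B, G.IsBlock B → G.IsClique B) {A S T : Set V}
include hblock

theorem AlmostCoversBlocks.diff_singleton (hS : G.AlmostCoversBlocks S) {B : Set V} {x : V}
    (hx : ¬ G.IsCutVertex x) (hB : G.IsBlock B) (hxB : x ∈ B) (hBS : B ⊆ S) :
    G.AlmostCoversBlocks (S \ {x}) := by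
  intro B' hB'
  by_cases hxB' : x ∈ B'
  · obtain rfl := hB.eq_of_not_isCutVertex hblock hx hxB hB' hxB'
    refine (ncard_le_ncard (t := {x}) fun c (hc : c ∈ B \ (S \ {x})) => ?_).trans
      (ncard_singleton x).le
    by_contra hcx
    exact hc.2 ⟨hBS hc.1, hcx⟩
  · refine (ncard_le_ncard (t := B' \ S) fun c (hc : c ∈ B' \ (S \ {x})) =>
      ⟨hc.1, fun hcS => hc.2 ⟨hcS, ?_⟩⟩).trans (hS B' hB')
    rintro rfl
    exact hxB' hc.1

theorem exists_exchange (hAS : A ⊆ S) (hAT : A ⊆ T) (hcutS : ∀ v, G.IsCutVertex v → v ∈ S)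
    (hS : G.AlmostCoversBlocks S) (hcutT : ∀ v, G.IsCutVertex v → v ∈ T)
    (hT : G.AlmostCoversBlocks T)
    (hmin : ∀ S', A ⊆ S' → S' ⊆ S → (∀ v, G.IsCutVertex v → v ∈ S') →
      G.AlmostCoversBlocks S' → S' = S) {x : V} (hx : x ∈ S \ T) :
    ∃ y ∈ T \ S, ∃ B, G.IsBlock B ∧ B \ T = {x} ∧ B \ S = {y} := by
  have hxc : ¬ G.IsCutVertex x := mt (hcutT x) hx.2
  obtain ⟨B, hB, hxB⟩ := exists_isBlock_insert_neighborSet_subset hblock hxc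
  have hxB : x ∈ B := hxB (mem_insert x _)
  obtain ⟨y, hyB, hyS⟩ : ∃ y ∈ B, y ∉ S := by
    by_contra! hBS
    have hSx := hmin (S \ {x})
      (fun a ha => ⟨hAS ha, fun hax => hx.2 (mem_singleton_iff.1 hax ▸ hAT ha)⟩) sdiff_subset
      (fun v hv => ⟨hcutS v hv, fun hvx => hxc (mem_singleton_iff.1 hvx ▸ hv)⟩)
      (hS.diff_singleton hblock hxc hB hxB hBS)
    have hxS := hx.1
    rw [← hSx] at hxS
    exact hxS.2 rfl
  have hyT : y ∈ T := by
    by_contra hyT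
    exact hyS (hT.eq_of_notMem hB hyB hxB hyT hx.2 ▸ hx.1)
  refine ⟨y, ⟨hyT, hyS⟩, B, hB, ?_, ?_⟩
  · exact eq_singleton_iff_unique_mem.2
      ⟨⟨hxB, hx.2⟩, fun c hc => hT.eq_of_notMem hB hc.1 hxB hc.2 hx.2⟩
  · exact eq_singleton_iff_unique_mem.2
      ⟨⟨hyB, hyS⟩, fun c hc => hS.eq_of_notMem hB hc.1 hyB hc.2 hyS⟩

theorem ncard_diff_le_ncard_diff_of_minimal (hAS : A ⊆ S) (hAT : A ⊆ T)
    (hcutS : ∀ v, G.IsCutVertex v → v ∈ S) (hS : G.AlmostCoversBlocks S)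
    (hcutT : ∀ v, G.IsCutVertex v → v ∈ T) (hT : G.AlmostCoversBlocks T)
    (hmin : ∀ S', A ⊆ S' → S' ⊆ S → (∀ v, G.IsCutVertex v → v ∈ S') →
      G.AlmostCoversBlocks S' → S' = S) : (S \ T).ncard ≤ (T \ S).ncard := by
  choose! f hf B hB hBT hBS using fun x (hx : x ∈ S \ T) =>
    exists_exchange hblock hAS hAT hcutS hS hcutT hT hmin hx
  refine ncard_le_ncard_of_injOn f hf fun x hx x' hx' hxx' => ?_
  have hy : f x ∈ B x := ((hBS x hx).symm ▸ rfl : f x ∈ B x \ S).1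
  have hy' : f x ∈ B x' := hxx' ▸ ((hBS x' hx').symm ▸ rfl : f x' ∈ B x' \ S).1
  have hBB := (hB x hx).eq_of_not_isCutVertex hblock (mt (hcutS _) (hf x hx).2) hy (hB x' hx') hy'
  have : x' ∈ B x \ T := hBB ▸ (hBT x' hx').symm ▸ rfl
  rw [hBT x hx] at this
  exact this.symm

end Exchange

end SimpleGraph

/-- For a block graph `G` with no pendant paths, different from a path: supersets of
connected zero forcing sets are connected zero forcing sets, and for every `A ⊆ V` all
minimal supersets of `A` which are connected zero forcing sets have the same cardinality. -/
theorem stmt19 {V : Type} [Fintype V] (G : SimpleGraph V) (hG : G.Connected)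
    (hblock : ∀ B : Set V, G.IsBlock B → ∀ u ∈ B, ∀ w ∈ B, u ≠ w → G.Adj u w)
    (hnp : ∀ (v : V) (P : Set V), ¬ G.IsPendantPath v P)
    (hnpath : ¬ G.IsPathGraphOn Set.univ) :
    (∀ S S' : Set V, G.IsConnectedZFS S → S ⊆ S' → G.IsConnectedZFS S') ∧
    (∀ A S₁ S₂ : Set V, A ⊆ S₁ → A ⊆ S₂ →
      G.IsConnectedZFS S₁ → G.IsConnectedZFS S₂ →
      (∀ S' : Set V, A ⊆ S' → S' ⊆ S₁ → G.IsConnectedZFS S' → S' = S₁) →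
      (∀ S' : Set V, A ⊆ S' → S' ⊆ S₂ → G.IsConnectedZFS S' → S' = S₂) →
      S₁.ncard = S₂.ncard) := by
  have := G.nontrivial_of_not_isPathGraphOn_univ hG hnpath
  have hdeg : ∀ x, ∃ u u', G.Adj x u ∧ G.Adj x u' ∧ u ≠ u' := fun x => by
    obtain ⟨u, hxu⟩ := hG.preconnected.exists_adj_of_nontrivial x
    obtain ⟨u', hxu', hu'u⟩ := G.exists_adj_ne_of_forall_not_isPendantPath hnp hxu
    exact ⟨u, u', hxu, hxu', hu'u.symm⟩
  have hiff := fun S => G.isConnectedZFS_iff hG hblock hnp hdeg (S := S)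
  refine ⟨fun S S' hS hSS' => ?_, fun A S₁ S₂ hA₁ hA₂ h₁ h₂ hmin₁ hmin₂ => ?_⟩
  · obtain ⟨hcut, hS⟩ := (hiff S).1 hS
    exact (hiff S').2 ⟨fun v hv => hSS' (hcut v hv), hS.mono hSS'⟩
  simp only [hiff, and_imp] at h₁ h₂ hmin₁ hmin₂
  have h₁₂ := G.ncard_diff_le_ncard_diff_of_minimal hblock hA₁ hA₂ h₁.1 h₁.2 h₂.1 h₂.2
    hmin₁
  have h₂₁ := G.ncard_diff_le_ncard_diff_of_minimal hblock hA₂ hA₁ h₂.1 h₂.2 h₁.1 h₁.2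
    hmin₂
  have e₁ := Set.ncard_inter_add_ncard_sdiff_eq_ncard S₁ S₂
  have e₂ := Set.ncard_inter_add_ncard_sdiff_eq_ncard S₂ S₁
  rw [Set.inter_comm] at e₂
  omega
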